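/- arXiv:1603.08099 — 2 statements merged into one kernel-verified Lean document; each statement's English description precedes it below -/
import Mathlib

section
/- In the heterogeneous HK dynamics with r = min_i r_i, c = lim x_min(t), c' = lim x_max(t): if c' − c > 2r, then there exist a time t* and nonempty disjoint sets C, C' of agents with x_i(t) = c for i ∈ C, x_j(t) = c' for j ∈ C', and for every agent k ∉ C ∪ C' and all t ≥ t*, x_k(t) − c > r and c' − x_k(t) > r. -/
open Finset Filter Topology

/-- Neighbor set of agent `i` given confidence bounds `r` and opinion profile `y`. -/
noncomputable def hkN {n : ℕ} (r : Fin n → ℝ) (y : Fin n → ℝ) (i : Fin n) : Finset (Fin n) :=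
  Finset.univ.filter fun j => |y j - y i| ≤ r i

/-- The heterogeneous Hegselmann-Krause update rule. -/
def isHK {n : ℕ} (r : Fin n → ℝ) (x : ℕ → Fin n → ℝ) : Prop :=
  ∀ t i, x (t + 1) i = (∑ j ∈ hkN r (x t) i, x t j) / ((hkN r (x t) i).card : ℝ)

lemma mem_hkN {n : ℕ} {r y : Fin n → ℝ} {i j : Fin n} :
    j ∈ hkN r y i ↔ |y j - y i| ≤ r i := by simp [hkN]

lemma self_mem_hkN {n : ℕ} {r y : Fin n → ℝ} {i : Fin n} (h : 0 ≤ r i) : i ∈ hkN r y i := by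
  simp [hkN, h]

lemma hkN_card_le {n : ℕ} (r y : Fin n → ℝ) (i : Fin n) : (hkN r y i).card ≤ n := by
  simpa using Finset.card_le_univ (hkN r y i)

lemma avg_ge {ι : Type*} (s : Finset ι) (f : ι → ℝ) (a : ℝ) (hne : s.Nonempty)
    (h : ∀ j ∈ s, a ≤ f j) : a ≤ (∑ j ∈ s, f j) / s.card := by
  have hc : (0:ℝ) < s.card := by exact_mod_cast Finset.card_pos.mpr hne
  rw [le_div_iff₀ hc]
  have := Finset.card_nsmul_le_sum s f a h
  rw [nsmul_eq_mul] at this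
  linarith

lemma mem_le_avg {ι : Type*} [DecidableEq ι] (s : Finset ι) (f : ι → ℝ) (a : ℝ) {j : ι}
    (hj : j ∈ s) (h : ∀ k ∈ s, a ≤ f k) :
    f j ≤ a + s.card * ((∑ k ∈ s, f k) / s.card - a) := by
  have h1 : 1 ≤ s.card := Finset.card_pos.mpr ⟨j, hj⟩
  have hc : (0:ℝ) < s.card := by exact_mod_cast h1
  have h2 : ((s.card - 1 : ℕ) : ℝ) * a ≤ ∑ k ∈ s.erase j, f k := by
    have h3 := Finset.card_nsmul_le_sum (s.erase j) f a (fun k hk => h k (Finset.mem_of_mem_erase hk))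
    rwa [Finset.card_erase_of_mem hj, nsmul_eq_mul] at h3
  have h4 : ((s.card - 1 : ℕ) : ℝ) = (s.card : ℝ) - 1 := by
    push_cast [h1]; ring
  have hsum : ∑ k ∈ s, f k = f j + ∑ k ∈ s.erase j, f k := (Finset.add_sum_erase s f hj).symm
  have h5 : a + (s.card : ℝ) * ((∑ k ∈ s, f k) / s.card - a) = (∑ k ∈ s, f k) - ((s.card:ℝ) - 1) * a := by
    field_simp; ring
  rw [h5]
  rw [h4] at h2
  linarith

lemma avg_gt {ι : Type*} [DecidableEq ι] (s : Finset ι) (f : ι → ℝ) (a b : ℝ) {j : ι}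
    (hj : j ∈ s) (h : ∀ k ∈ s, a ≤ f k) (hb : a + b < f j) (hbpos : 0 < b)
    (N : ℕ) (hN : s.card ≤ N) :
    a + b / N < (∑ k ∈ s, f k) / s.card := by
  have h1 : 1 ≤ s.card := Finset.card_pos.mpr ⟨j, hj⟩
  have hc : (0:ℝ) < s.card := by exact_mod_cast h1
  have hNc : (0:ℝ) < N := lt_of_lt_of_le hc (by exact_mod_cast hN)
  have h2 : ((s.card : ℝ) - 1) * a ≤ ∑ k ∈ s.erase j, f k := by
    have h3 := Finset.card_nsmul_le_sum (s.erase j) f a (fun k hk => h k (Finset.mem_of_mem_erase hk))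
    rw [Finset.card_erase_of_mem hj, nsmul_eq_mul] at h3
    have h4 : ((s.card - 1 : ℕ) : ℝ) = (s.card : ℝ) - 1 := by push_cast [h1]; ring
    linarith [h4 ▸ h3]
  have hsum : ∑ k ∈ s, f k = f j + ∑ k ∈ s.erase j, f k := (Finset.add_sum_erase s f hj).symm
  have key : (s.card : ℝ) * a + b < ∑ k ∈ s, f k := by linarith
  have hdiv : a + b / s.card < (∑ k ∈ s, f k) / s.card := by
    have he : (a + b / (s.card:ℝ)) * s.card = (s.card:ℝ) * a + b := by field_simp
    rw [lt_div_iff₀ hc, he]; exact key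
  have : b / (N:ℝ) ≤ b / s.card := by
    apply div_le_div_of_nonneg_left hbpos.le hc
    exact_mod_cast hN
  linarith

lemma hk_bottom {n : ℕ} (hn : 0 < n) (r : Fin n → ℝ) (x : ℕ → Fin n → ℝ)
    (hr : ∀ i, 0 < r i) (hHK : isHK r x) (c : ℝ)
    (hc : Tendsto (fun t => ⨅ i, x t i) atTop (𝓝 c)) :
    ∃ t1 : ℕ, ∃ C : Finset (Fin n), C.Nonempty ∧
      ∀ t, t1 ≤ t → (∀ i ∈ C, x t i = c) ∧ ∀ k, k ∉ C → x t k - c > ⨅ i, r i := by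
  haveI : Nonempty (Fin n) := Fin.pos_iff_nonempty.mp hn
  set ρ := ⨅ i, r i with hρdef
  set m : ℕ → ℝ := fun t => ⨅ i, x t i with hmdef
  have hρ_le : ∀ i, ρ ≤ r i := fun i =>
    ciInf_le (Set.Finite.bddBelow (Set.finite_range r)) i
  have hρpos : 0 < ρ := by
    obtain ⟨i0, hi0⟩ := exists_eq_ciInf_of_finite (f := r)
    rw [← hρdef] at hi0
    rw [← hi0]; exact hr i0
  have hmle : ∀ t i, m t ≤ x t i := fun t i =>
    ciInf_le (Set.Finite.bddBelow (Set.finite_range (x t))) i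
  have hmex : ∀ t, ∃ i, x t i = m t := fun t => exists_eq_ciInf_of_finite
  have hNne : ∀ t i, (hkN r (x t) i).Nonempty := fun t i => ⟨i, self_mem_hkN (hr i).le⟩
  -- monotonicity of the minimum
  have hmono : Monotone m := by
    apply monotone_nat_of_le_succ
    intro t
    apply le_ciInf
    intro i
    rw [hHK t i]
    exact avg_ge _ _ _ (hNne t i) (fun j _ => hmle t j)
  have hmc : ∀ t, m t ≤ c := fun t => hmono.ge_of_tendsto hc t
  -- Gap lemma (G)
  have gap : ∀ t j, x t j ≤ m t + n * (m (t+1) - m t) ∨ m t + ρ < x t j := by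
    intro t j
    by_contra hcon
    push_neg at hcon
    obtain ⟨h1, h2⟩ := hcon
    obtain ⟨k, hk⟩ := hmex (t+1)
    have hΔ : (0:ℝ) ≤ m (t+1) - m t := by
      have := hmono (Nat.le_succ t); linarith
    have hbound : ∀ l ∈ hkN r (x t) k, x t l ≤ m t + n * (m (t+1) - m t) := by
      intro l hl
      have hle := mem_le_avg (hkN r (x t) k) (x t) (m t) hl (fun p _ => hmle t p)
      rw [← hHK t k, hk] at hle
      have hcard : ((hkN r (x t) k).card : ℝ) ≤ n := by exact_mod_cast hkN_card_le r (x t) k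
      nlinarith
    have hks : k ∈ hkN r (x t) k := self_mem_hkN (hr k).le
    have hxk : x t k ≤ m t + n * (m (t+1) - m t) := hbound k hks
    have hj : j ∈ hkN r (x t) k := by
      rw [mem_hkN]
      rw [abs_le]
      constructor
      · have := hmle t k
        have h0 : (0:ℝ) < r k := hr k
        nlinarith
      · have := hρ_le k
        linarith [hmle t k]
    exact absurd (hbound j hj) (not_le.mpr h1)
  -- push lemma (P)
  have push : ∀ t i j, j ∈ hkN r (x t) i → m t + ρ < x t j → m t + ρ / n < x (t+1) i := by
    intro t i j hj hij
    rw [hHK t i]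
    exact avg_gt _ _ (m t) ρ hj (fun p _ => hmle t p) hij hρpos n (hkN_card_le r (x t) i)
  -- choose ε and t0
  set ε := ρ / (2 * (n:ℝ) * ((n:ℝ) + 1)) with hεdef
  have hn1 : (1:ℝ) ≤ n := by exact_mod_cast hn
  have hε : 0 < ε := by
    apply div_pos hρpos; positivity
  have hnpos : (0:ℝ) < n := by linarith
  have hεmul : ε * (2 * (n:ℝ) * ((n:ℝ) + 1)) = ρ := by
    rw [hεdef]; field_simp
  have hkey : (n:ℝ) * ε ≤ ρ / n := by
    rw [le_div_iff₀ hnpos]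
    nlinarith [hε.le, mul_nonneg hnpos.le hε.le, mul_nonneg (mul_nonneg hnpos.le hnpos.le) hε.le]
  have hρn : ρ / n ≤ ρ := by
    rw [div_le_iff₀ hnpos]; nlinarith
  -- choose t0 with m t close to c
  obtain ⟨t0, ht0⟩ : ∃ t0, ∀ t, t0 ≤ t → c - ε < m t := by
    have := (Metric.tendsto_atTop.mp hc) ε hε
    obtain ⟨N, hN⟩ := this
    refine ⟨N, fun t ht => ?_⟩
    have := hN t ht
    rw [Real.dist_eq, abs_lt] at this
    linarith [this.1]
  -- bottom cluster
  set B : ℕ → Finset (Fin n) := fun t => Finset.univ.filter (fun j => x t j ≤ m t + ρ) with hBdef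
  have hBmem : ∀ t j, j ∈ B t ↔ x t j ≤ m t + ρ := by intro t j; simp [hBdef]
  have hBne : ∀ t, (B t).Nonempty := by
    intro t
    obtain ⟨k, hk⟩ := hmex t
    exact ⟨k, (hBmem t k).mpr (by linarith [hρpos])⟩
  -- exclusion: agents pushed up are out of the next bottom cluster
  have excl : ∀ t, t0 ≤ t → ∀ i, m t + ρ / n < x (t+1) i → i ∉ B (t+1) := by
    intro t ht i hi hmem
    rw [hBmem] at hmem
    rcases gap (t+1) i with hg | hg
    · have e1 : m (t+1) ≤ c := hmc (t+1)
      have e2 : m (t+2) ≤ c := hmc (t+2)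
      have e3 : c - ε < m (t+1) := ht0 (t+1) (by omega)
      have e4 : c - ε < m t := ht0 t ht
      -- x (t+1) i ≤ m(t+1) + n*(m(t+2)-m(t+1)) ≤ c + (n-1)ε and > c - ε + ρ/n
      have e5 : (n:ℝ) * (m (t+2) - m (t+1)) ≤ (n:ℝ) * ε := by
        apply mul_le_mul_of_nonneg_left _ hnpos.le
        linarith
      nlinarith [hkey]
    · linarith
  have shrink1 : ∀ t, t0 ≤ t → ∀ j, j ∉ B t → j ∉ B (t+1) := by
    intro t ht j hj
    apply excl t ht
    apply push t j j (self_mem_hkN (hr j).le)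
    rw [hBmem] at hj
    exact not_le.mp hj
  have shrink2 : ∀ t, t0 ≤ t → ∀ i, ∀ j, j ∈ hkN r (x t) i → j ∉ B t → i ∉ B (t+1) := by
    intro t ht i j hj hjB
    apply excl t ht
    apply push t i j hj
    rw [hBmem] at hjB
    exact not_le.mp hjB
  have hBsub : ∀ s, t0 ≤ s → ∀ t, s ≤ t → B t ⊆ B s := by
    intro s hs t hts
    induction t with
    | zero => have : s = 0 := Nat.le_zero.mp hts; rw [this]
    | succ t ih =>
      rcases Nat.lt_or_ge s (t+1) with h | h
      · have hst : s ≤ t := by omega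
        refine (fun j hj => ih hst ?_)
        by_contra hjB
        exact shrink1 t (le_trans hs hst) j hjB hj
      · have : s = t + 1 := by omega
        rw [this]
  -- B is eventually a constant set C
  obtain ⟨N, hNmin⟩ : ∃ N, ∀ k, (B (t0 + N)).card ≤ (B (t0 + k)).card := by
    have hne : (Set.range (fun k => (B (t0 + k)).card)).Nonempty := ⟨_, ⟨0, rfl⟩⟩
    obtain ⟨N, hN⟩ := Nat.sInf_mem hne
    refine ⟨N, fun k => ?_⟩
    have h2 : (B (t0 + N)).card = sInf (Set.range fun k => (B (t0 + k)).card) := hN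
    rw [h2]
    exact Nat.sInf_le ⟨k, rfl⟩
  set t1 := t0 + N with ht1def
  have ht01 : t0 ≤ t1 := Nat.le_add_right _ _
  set C : Finset (Fin n) := B t1 with hCdef
  have hBconst : ∀ t, t1 ≤ t → B t = C := by
    intro t ht
    have hsub : B t ⊆ B t1 := hBsub t1 ht01 t ht
    have he : t = t0 + (N + (t - t1)) := by omega
    have hcard : (B t1).card ≤ (B t).card := by
      calc (B t1).card ≤ (B (t0 + (N + (t - t1)))).card := hNmin _
        _ = (B t).card := by rw [← he]
    exact Finset.eq_of_subset_of_card_le hsub hcard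
  have hCne : C.Nonempty := hBne t1
  -- for t ≥ t1, every member of C has neighborhood exactly C
  have hCfull : ∀ t, t1 ≤ t → ∀ i ∈ C, hkN r (x t) i = C := by
    intro t ht i hi
    apply Finset.Subset.antisymm
    · intro j hj
      by_contra hjC
      have hjB : j ∉ B t := by rw [hBconst t ht]; exact hjC
      have : i ∉ B (t+1) := shrink2 t (le_trans ht01 ht) i j hj hjB
      rw [hBconst (t+1) (by omega)] at this
      exact this hi
    · intro j hj
      rw [mem_hkN]
      have hiB : i ∈ B t := by rw [hBconst t ht]; exact hi
      have hjB : j ∈ B t := by rw [hBconst t ht]; exact hj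
      have hgi : x t i ≤ m t + n * (m (t+1) - m t) := by
        rcases gap t i with h | h
        · exact h
        · exact absurd ((hBmem t i).mp hiB) (not_le.mpr h)
      have hgj : x t j ≤ m t + n * (m (t+1) - m t) := by
        rcases gap t j with h | h
        · exact h
        · exact absurd ((hBmem t j).mp hjB) (not_le.mpr h)
      have hband : (n:ℝ) * (m (t+1) - m t) ≤ (n:ℝ) * ε := by
        apply mul_le_mul_of_nonneg_left _ hnpos.le
        have := hmc (t+1)
        have := ht0 t (le_trans ht01 ht)
        linarith
      have hri := hρ_le i
      rw [abs_le]
      constructor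
      · have := hmle t j
        nlinarith [hkey, hρn]
      · have := hmle t i
        nlinarith [hkey, hρn]
  -- consensus within C from time t1+1 on
  obtain ⟨i₀, hi₀⟩ := hCne
  set v := x (t1+1) i₀ with hvdef
  have hstep : ∀ t, t1 ≤ t → ∀ i ∈ C, x (t+1) i = (∑ j ∈ C, x t j) / (C.card : ℝ) := by
    intro t ht i hi
    rw [hHK t i, hCfull t ht i hi]
  have hbase : ∀ i ∈ C, x (t1+1) i = v := by
    intro i hi
    rw [hstep t1 le_rfl i hi, hvdef, hstep t1 le_rfl i₀ hi₀]
  have hconst : ∀ t, t1 + 1 ≤ t → ∀ i ∈ C, x t i = v := by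
    intro t
    induction t with
    | zero => omega
    | succ t ih =>
      intro ht i hi
      rcases Nat.lt_or_ge t (t1 + 1) with h | h
      · have : t = t1 := by omega
        subst this
        exact hbase i hi
      · rw [hstep t (by omega) i hi]
        have : ∑ j ∈ C, x t j = (C.card : ℝ) * v := by
          rw [Finset.sum_congr rfl (fun j hj => ih h j hj), Finset.sum_const, nsmul_eq_mul]
        rw [this]
        field_simp
  -- the consensus value equals c
  have hvc : v = c := by
    have hCi₀ : ∀ t, t1 + 1 ≤ t → x t i₀ = v := fun t ht => hconst t ht i₀ hi₀
    have hlow : c ≤ v := by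
      apply le_of_tendsto hc
      filter_upwards [eventually_ge_atTop (t1 + 1)] with t ht
      rw [← hCi₀ t ht]
      exact hmle t i₀
    have hupp : v ≤ c := by
      have hT : Tendsto (fun t => m t + (n:ℝ) * (m (t+1) - m t)) atTop (𝓝 (c + (n:ℝ) * (c - c))) := by
        apply hc.add
        apply Tendsto.const_mul
        exact (hc.comp (tendsto_add_atTop_nat 1)).sub hc
      rw [sub_self, mul_zero, add_zero] at hT
      apply ge_of_tendsto hT
      filter_upwards [eventually_ge_atTop (t1 + 1)] with t ht
      have hiB : i₀ ∈ B t := by rw [hBconst t (by omega)]; exact hi₀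
      rcases gap t i₀ with h | h
      · rw [← hCi₀ t ht]; exact h
      · exact absurd ((hBmem t i₀).mp hiB) (not_le.mpr h)
    linarith
  -- the minimum equals c from time t1+1 on
  have hmfix : ∀ t, t1 + 1 ≤ t → m t = c := by
    intro t ht
    obtain ⟨j, hj⟩ := hmex t
    by_cases hjC : j ∈ C
    · rw [← hj, hconst t ht j hjC, hvc]
    · have hjB : j ∉ B t := by rw [hBconst t (by omega)]; exact hjC
      rw [hBmem] at hjB
      push_neg at hjB
      linarith [hj ▸ hjB, hρpos]
  refine ⟨t1 + 1, C, hBne t1, fun t ht => ⟨fun i hi => by rw [hconst t ht i hi, hvc], ?_⟩⟩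
  intro k hk
  have hkB : k ∉ B t := by rw [hBconst t (by omega)]; exact hk
  rw [hBmem] at hkB
  push_neg at hkB
  have := hmfix t ht
  linarith

lemma iInf_neg_fin {n : ℕ} (hn : 0 < n) (f : Fin n → ℝ) : (⨅ i, -f i) = -⨆ i, f i := by
  haveI : Nonempty (Fin n) := Fin.pos_iff_nonempty.mp hn
  apply le_antisymm
  · obtain ⟨i, hi⟩ := exists_eq_ciSup_of_finite (f := f)
    calc (⨅ j, -f j) ≤ -f i := ciInf_le (Set.Finite.bddBelow (Set.finite_range _)) i
      _ = -⨆ j, f j := by rw [hi]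
  · apply le_ciInf
    intro i
    exact neg_le_neg (le_ciSup (Set.Finite.bddAbove (Set.finite_range f)) i)

lemma isHK_neg {n : ℕ} (r : Fin n → ℝ) (x : ℕ → Fin n → ℝ) (h : isHK r x) :
    isHK r (fun t i => -x t i) := by
  intro t i
  have hNeq : hkN r (fun j => -x t j) i = hkN r (x t) i := by
    ext j
    simp only [mem_hkN, neg_sub_neg]
    rw [abs_sub_comm]
  show -x (t+1) i = (∑ j ∈ hkN r (fun j => -x t j) i, -x t j) / _
  rw [hNeq, h t i, Finset.sum_neg_distrib, neg_div]

theorem stmt_12 (n : ℕ) (hn : 0 < n) (r : Fin n → ℝ) (x : ℕ → Fin n → ℝ)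
    (hr : ∀ i, 0 < r i ∧ r i ≤ 1) (hx0 : ∀ i, x 0 i ∈ Set.Icc (0 : ℝ) 1)
    (hHK : isHK r x) (c c' : ℝ)
    (hc : Tendsto (fun t => ⨅ i, x t i) atTop (𝓝 c))
    (hc' : Tendsto (fun t => ⨆ i, x t i) atTop (𝓝 c'))
    (hgap : c' - c > 2 * ⨅ i, r i) :
    ∃ tstar : ℕ, ∃ C C' : Finset (Fin n), C.Nonempty ∧ C'.Nonempty ∧ Disjoint C C' ∧
      ∀ t, tstar ≤ t →
        (∀ i ∈ C, x t i = c) ∧ (∀ j ∈ C', x t j = c') ∧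
        ∀ k : Fin n, k ∉ C ∪ C' →
          x t k - c > ⨅ i, r i ∧ c' - x t k > ⨅ i, r i := by
  haveI : Nonempty (Fin n) := Fin.pos_iff_nonempty.mp hn
  have hr' : ∀ i, 0 < r i := fun i => (hr i).1
  have hρpos : 0 < ⨅ i, r i := by
    obtain ⟨i0, hi0⟩ := exists_eq_ciInf_of_finite (f := r)
    rw [← hi0]; exact hr' i0
  obtain ⟨t1, C, hCne, hC⟩ := hk_bottom hn r x hr' hHK c hc
  have hHKneg : isHK r (fun t i => -x t i) := isHK_neg r x hHK
  have hcneg : Tendsto (fun t => ⨅ i, -x t i) atTop (𝓝 (-c')) := by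
    have he : (fun t => ⨅ i, -x t i) = fun t => -⨆ i, x t i :=
      funext fun t => iInf_neg_fin hn (x t)
    rw [he]
    exact hc'.neg
  obtain ⟨t2, C', hC'ne, hC'⟩ := hk_bottom hn r (fun t i => -x t i) hr' hHKneg (-c') hcneg
  refine ⟨max t1 t2, C, C', hCne, hC'ne, ?_, ?_⟩
  · rw [Finset.disjoint_left]
    intro a haC haC'
    have h1 : x (max t1 t2) a = c := (hC _ (le_max_left _ _)).1 a haC
    have h2 : -x (max t1 t2) a = -c' := (hC' _ (le_max_right _ _)).1 a haC'
    have : c = c' := by linarith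
    linarith
  · intro t ht
    have htt1 : t1 ≤ t := le_trans (le_max_left _ _) ht
    have htt2 : t2 ≤ t := le_trans (le_max_right _ _) ht
    refine ⟨(hC t htt1).1, fun j hj => ?_, fun k hk => ?_⟩
    · have := (hC' t htt2).1 j hj
      linarith
    · rw [Finset.mem_union] at hk
      push_neg at hk
      constructor
      · exact (hC t htt1).2 k hk.1
      · have := (hC' t htt2).2 k hk.2
        linarith
end

section
/- In the heterogeneous HK dynamics with r = min_i r_i, if the initial opinions satisfy x_max(0) − x_min(0) ≤ 2r, then all opinions converge in finite time: there exist t* and values x_i* with x_i(t) = x_i* for all t ≥ t*. -/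
open Finset Filter Topology

namespace HKaux

variable {ι : Type*}

lemma card_pos_real {s : Finset ι} (hs : s.Nonempty) : (0:ℝ) < s.card := by
  exact_mod_cast hs.card_pos

lemma avg_le {s : Finset ι} (hs : s.Nonempty) {y : ι → ℝ} {M : ℝ}
    (h : ∀ j ∈ s, y j ≤ M) : (∑ j ∈ s, y j) / (s.card : ℝ) ≤ M := by
  rw [div_le_iff₀ (card_pos_real hs)]
  calc ∑ j ∈ s, y j ≤ ∑ _j ∈ s, M := sum_le_sum h
    _ = M * s.card := by rw [sum_const, nsmul_eq_mul, mul_comm]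

lemma le_avg {s : Finset ι} (hs : s.Nonempty) {y : ι → ℝ} {m : ℝ}
    (h : ∀ j ∈ s, m ≤ y j) : m ≤ (∑ j ∈ s, y j) / (s.card : ℝ) := by
  rw [le_div_iff₀ (card_pos_real hs)]
  calc m * s.card = ∑ _j ∈ s, m := by rw [sum_const, nsmul_eq_mul, mul_comm]
    _ ≤ ∑ j ∈ s, y j := sum_le_sum h

lemma avg_const {s : Finset ι} (hs : s.Nonempty) {y : ι → ℝ} {c : ℝ}
    (h : ∀ j ∈ s, y j = c) : (∑ j ∈ s, y j) / (s.card : ℝ) = c :=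
  le_antisymm (avg_le hs fun j hj => (h j hj).le) (le_avg hs fun j hj => (h j hj).ge)

lemma erase_bound {s : Finset ι} [DecidableEq ι] {y : ι → ℝ} {m : ℝ} {j0 : ι} (hj0 : j0 ∈ s)
    (hm : ∀ j ∈ s, m ≤ y j) :
    ((s.card : ℝ) - 1) * m ≤ ∑ j ∈ s.erase j0, y j := by
  have h1 : (s.erase j0).card • m ≤ ∑ j ∈ s.erase j0, y j :=
    Finset.card_nsmul_le_sum _ _ _ (fun j hj => hm j (mem_of_mem_erase hj))
  have h2 : ((s.erase j0).card : ℝ) = (s.card : ℝ) - 1 := by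
    rw [card_erase_of_mem hj0]
    have : 1 ≤ s.card := card_pos.2 ⟨j0, hj0⟩
    push_cast [Nat.cast_sub this]
    ring
  calc ((s.card : ℝ) - 1) * m = ((s.erase j0).card : ℝ) * m := by rw [h2]
    _ = (s.erase j0).card • m := by rw [nsmul_eq_mul]
    _ ≤ _ := h1

lemma member_le {s : Finset ι} [DecidableEq ι] {y : ι → ℝ} {m A : ℝ} {j0 : ι} (hj0 : j0 ∈ s)
    (hm : ∀ j ∈ s, m ≤ y j) (hA : (∑ j ∈ s, y j) / (s.card : ℝ) ≤ A) :
    y j0 ≤ A + ((s.card : ℝ) - 1) * (A - m) := by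
  have hs : s.Nonempty := ⟨j0, hj0⟩
  have hsum : (∑ j ∈ s, y j) ≤ A * s.card := by
    rw [div_le_iff₀ (card_pos_real hs)] at hA; exact hA
  have hsplit : (∑ j ∈ s.erase j0, y j) + y j0 = ∑ j ∈ s, y j := Finset.sum_erase_add s y hj0
  have := erase_bound hj0 hm
  nlinarith [card_pos_real hs]

lemma le_avg_push {s : Finset ι} [DecidableEq ι] {y : ι → ℝ} {m M : ℝ} {j0 : ι} (hj0 : j0 ∈ s)
    (hm : ∀ j ∈ s, m ≤ y j) (hM : M ≤ y j0) :
    m + (M - m) / (s.card : ℝ) ≤ (∑ j ∈ s, y j) / (s.card : ℝ) := by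
  have hs : s.Nonempty := ⟨j0, hj0⟩
  have hk := card_pos_real hs
  rw [le_div_iff₀ hk]
  have hsplit : (∑ j ∈ s.erase j0, y j) + y j0 = ∑ j ∈ s, y j := Finset.sum_erase_add s y hj0
  have he := erase_bound hj0 hm
  have : (m + (M - m) / (s.card:ℝ)) * s.card = m * s.card + (M - m) := by
    field_simp
  rw [this]
  nlinarith

lemma avg_le_push {s : Finset ι} [DecidableEq ι] {y : ι → ℝ} {M' M : ℝ} {j0 : ι} (hj0 : j0 ∈ s)
    (hm : ∀ j ∈ s, y j ≤ M') (hM : y j0 ≤ M) :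
    (∑ j ∈ s, y j) / (s.card : ℝ) ≤ M' + (M - M') / (s.card : ℝ) := by
  have h := le_avg_push (y := fun j => -y j) (m := -M') (M := -M) hj0
    (fun j hj => neg_le_neg (hm j hj)) (neg_le_neg hM)
  have hsum : (∑ j ∈ s, -y j) = -∑ j ∈ s, y j := by rw [Finset.sum_neg_distrib]
  rw [hsum] at h
  have hk := card_pos_real ⟨j0, hj0⟩
  have h2 : -M' + (-M - -M') / (s.card:ℝ) = -(M' + (M - M')/(s.card:ℝ)) := by
    field_simp; ring
  rw [h2, neg_div, neg_le_neg_iff] at h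
  exact h

end HKaux

namespace HKaux

lemma iSup_neg_seq (g : ℕ → ℝ) (hb : BddBelow (Set.range g)) :
    (⨆ s, -g s) = -(⨅ s, g s) := by
  obtain ⟨lb, hlb⟩ := hb
  have hba : BddAbove (Set.range fun s => -g s) := by
    refine ⟨-lb, ?_⟩
    rintro y ⟨t, rfl⟩
    exact neg_le_neg (hlb ⟨t, rfl⟩)
  apply le_antisymm
  · exact ciSup_le fun t => neg_le_neg (ciInf_le ⟨lb, hlb⟩ t)
  · rw [neg_le]
    exact le_ciInf fun t => by rw [neg_le]; exact le_ciSup hba t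


lemma eq_of_avg_eq_le {ι : Type*} {s : Finset ι} [DecidableEq ι] {y : ι → ℝ} {m : ℝ} {j0 : ι}
    (hj0 : j0 ∈ s) (hm : ∀ j ∈ s, m ≤ y j)
    (havg : (∑ j ∈ s, y j) / (s.card : ℝ) = m) : y j0 = m := by
  refine le_antisymm ?_ (hm j0 hj0)
  have h1 := member_le hj0 hm havg.le
  simpa using h1

lemma eq_of_avg_eq_ge {ι : Type*} {s : Finset ι} [DecidableEq ι] {y : ι → ℝ} {M : ℝ} {j0 : ι}
    (hj0 : j0 ∈ s) (hM : ∀ j ∈ s, y j ≤ M)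
    (havg : (∑ j ∈ s, y j) / (s.card : ℝ) = M) : y j0 = M := by
  have h2 : (∑ j ∈ s, (fun k => -y k) j) / (s.card : ℝ) = -M := by
    rw [Finset.sum_neg_distrib, neg_div, havg]
  have := eq_of_avg_eq_le (y := fun k => -y k) (m := -M) hj0
    (fun j hj => neg_le_neg (hM j hj)) h2
  simpa using this

set_option maxHeartbeats 2000000 in
lemma half (n : ℕ) (hn : 0 < n) (r : Fin n → ℝ) (x : ℕ → Fin n → ℝ)
    (hr0 : ∀ i, 0 < r i) (hHK : isHK r x)
    (ρ : ℝ) (hρ : 0 < ρ) (hρle : ∀ i, ρ ≤ r i)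
    (A B : ℕ → ℝ)
    (hA1 : ∀ t i, A t ≤ x t i) (hA2 : ∀ t, ∃ i, x t i = A t)
    (hB1 : ∀ t i, x t i ≤ B t) (hB2 : ∀ t, ∃ i, x t i = B t)
    (ε : ℝ) (hε : 0 < ε) (hε1 : ((n : ℝ) + 1) * ε < ρ / (2 * n)) :
    ∃ (T2 : ℕ) (W : Finset (Fin n)) (c : ℝ), W.Nonempty ∧
      (∀ t, T2 ≤ t → ∀ i, (i ∈ W ↔ x t i ≤ (⨆ s, A s) + n * ε)) ∧
      (∀ t, T2 ≤ t → ∀ i ∈ W, x t i = c) ∧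
      (∀ t, T2 ≤ t → ∀ i, i ∉ W → (⨆ s, A s) - ε + ρ < x t i) := by
  classical
  have hn0 : (0:ℝ) < n := by exact_mod_cast hn
  have hn1 : (1:ℝ) ≤ n := by exact_mod_cast hn
  -- basic facts about neighborhoods
  have hself : ∀ t i, i ∈ hkN r (x t) i := by
    intro t i
    simp [hkN, sub_self, abs_zero, (hr0 i).le]
  have hmemN : ∀ t i j, j ∈ hkN r (x t) i ↔ |x t j - x t i| ≤ r i := by
    intro t i j; simp [hkN]
  have hNne : ∀ t i, (hkN r (x t) i).Nonempty := fun t i => ⟨i, hself t i⟩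
  have hNcard : ∀ t i, ((hkN r (x t) i).card : ℝ) ≤ n := by
    intro t i
    have := Finset.card_le_univ (hkN r (x t) i)
    have h3 : (hkN r (x t) i).card ≤ n := by simpa using this
    exact_mod_cast h3
  -- monotonicity of A, B
  have hAstep : ∀ t, A t ≤ A (t + 1) := by
    intro t
    obtain ⟨i, hi⟩ := hA2 (t + 1)
    rw [← hi, hHK t i]
    exact le_avg (hNne t i) fun j _ => hA1 t j
  have hBstep : ∀ t, B (t + 1) ≤ B t := by
    intro t
    obtain ⟨i, hi⟩ := hB2 (t + 1)
    rw [← hi, hHK t i]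
    exact avg_le (hNne t i) fun j _ => hB1 t j
  have hAmono : Monotone A := monotone_nat_of_le_succ hAstep
  have hBanti : Antitone B := antitone_nat_of_succ_le hBstep
  have hbddA : BddAbove (Set.range A) := by
    refine ⟨B 0, ?_⟩
    rintro y ⟨t, rfl⟩
    obtain ⟨i, hi⟩ := hA2 t
    calc A t = x t i := hi.symm
      _ ≤ B t := hB1 t i
      _ ≤ B 0 := hBanti (Nat.zero_le t)
  set As := ⨆ s, A s with hAs
  have hAle : ∀ t, A t ≤ As := fun t => le_ciSup hbddA t
  -- T0 : times from which A t > As - ε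
  obtain ⟨t0, ht0⟩ : ∃ t0, As - ε < A t0 := by
    apply exists_lt_of_lt_ciSup
    obtain ⟨i, hi⟩ := hA2 0
    linarith [hAle 0]
  set T0 := t0 with hT0
  have hAT0 : ∀ t, T0 ≤ t → As - ε < A t := fun t ht => lt_of_lt_of_le ht0 (hAmono ht)
  -- numeric consequences of hε1
  have h2n2 : ρ / (2 * n) ≤ ρ / 2 :=
    div_le_div_of_nonneg_left hρ.le (by norm_num) (by linarith)
  have hε2 : ((n:ℝ) + 1) * ε < ρ / 2 := lt_of_lt_of_le hε1 h2n2
  have hεhalf : ε < ρ / 2 := by nlinarith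
  have hnερ : (n:ℝ) * ε < ρ := by nlinarith
  have hn1ερ : ((n:ℝ) + 1) * ε < ρ := by nlinarith
  -- the Gap lemma
  have gap : ∀ t, T0 ≤ t → ∀ j, x t j ≤ As + ρ / 2 → x t j ≤ As + ((n:ℝ) - 1) * ε := by
    intro t ht j hj
    obtain ⟨p, hp⟩ := hA2 (t + 1)
    have havg : (∑ k ∈ hkN r (x t) p, x t k) / ((hkN r (x t) p).card : ℝ) ≤ As := by
      rw [← hHK t p, hp]; exact hAle (t + 1)
    have hmem : ∀ j0 ∈ hkN r (x t) p, x t j0 ≤ As + ((n:ℝ) - 1) * ε := by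
      intro j0 hj0
      have h1 := member_le hj0 (fun k _ => (hAT0 t ht).le.trans (hA1 t k)) havg
      have hcard1 : (1:ℝ) ≤ ((hkN r (x t) p).card : ℝ) := by
        exact_mod_cast (hNne t p).card_pos
      have := hNcard t p
      nlinarith [hε.le]
    have hpmem := hself t p
    have hxp_le := hmem p hpmem
    have hxp_ge := hA1 t p
    have hjmem : j ∈ hkN r (x t) p := by
      rw [hmemN]
      rw [abs_le]
      constructor
      · -- -(r p) ≤ x t j - x t p
        have h1 : x t p - x t j ≤ (n:ℝ) * ε := by
          have := hAT0 t ht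
          have := hA1 t j
          nlinarith
        have := hρle p
        linarith [hnερ]
      · have := hAT0 t ht
        have h2 : x t j - x t p ≤ ρ / 2 + ε := by nlinarith [hA1 t p]
        have := hρle p
        linarith [hεhalf]
    exact hmem j hjmem
  -- the Push lemma
  have push : ∀ t, T0 ≤ t → ∀ i j, j ∈ hkN r (x t) i → As + (n:ℝ) * ε < x t j →
      As + (n:ℝ) * ε < x (t + 1) i := by
    intro t ht i j hj hjbig
    have hjhalf : As + ρ / 2 < x t j := by
      by_contra hcon
      push_neg at hcon
      have := gap t ht j hcon
      nlinarith
    rw [hHK t i]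
    have h5 := le_avg_push hj (m := As - ε) (M := As + ρ / 2)
      (fun k _ => (hAT0 t ht).le.trans (hA1 t k)) hjhalf.le
    have hcardpos : (0:ℝ) < ((hkN r (x t) i).card : ℝ) := card_pos_real (hNne t i)
    have hdivn : (As + ρ/2 - (As - ε)) / (n:ℝ) ≤ (As + ρ/2 - (As - ε)) / ((hkN r (x t) i).card : ℝ) :=
      div_le_div_of_nonneg_left (by linarith) hcardpos (hNcard t i)
    have hnum : ((n:ℝ) + 1) * ε < (ρ/2 + ε) / (n:ℝ) := by
      rw [lt_div_iff₀ hn0]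
      have hmul := (lt_div_iff₀ (by positivity : (0:ℝ) < 2*n)).1 hε1
      nlinarith [hmul]
    have : As - ε + (ρ/2 + ε) / (n:ℝ) ≤ (∑ k ∈ hkN r (x t) i, x t k) / ((hkN r (x t) i).card : ℝ) := by
      calc As - ε + (ρ/2 + ε) / (n:ℝ)
          = As - ε + (As + ρ/2 - (As - ε)) / (n:ℝ) := by ring_nf
        _ ≤ As - ε + (As + ρ/2 - (As - ε)) / ((hkN r (x t) i).card : ℝ) := by linarith
        _ ≤ _ := h5
    linarith
  -- the low band
  set Λ : ℕ → Finset (Fin n) := fun t => Finset.univ.filter (fun j => x t j ≤ As + (n:ℝ) * ε)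
    with hΛdef
  have hΛmem : ∀ t i, i ∈ Λ t ↔ x t i ≤ As + (n:ℝ) * ε := by
    intro t i; simp [hΛdef]
  -- neighborhoods of band members stay in the band
  have hΛN : ∀ t, T0 ≤ t → ∀ i, i ∈ Λ (t + 1) → (hkN r (x t) i) ⊆ Λ t := by
    intro t ht i hi j hj
    rw [hΛmem]
    by_contra hcon
    push_neg at hcon
    have := push t ht i j hj hcon
    rw [hΛmem] at hi
    linarith
  have hΛsub : ∀ t, T0 ≤ t → Λ (t + 1) ⊆ Λ t := by
    intro t ht i hi
    exact hΛN t ht i hi (hself t i)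
  have hΛchain : ∀ t t', T0 ≤ t → t ≤ t' → Λ t' ⊆ Λ t := by
    intro t t' ht htt'
    induction t' , htt' using Nat.le_induction with
    | base => exact subset_rfl
    | succ t'' ht'' ih => exact (hΛsub t'' (le_trans ht ht'')).trans ih
  -- stabilization
  obtain ⟨T1, hT1ge, hstab⟩ : ∃ T1, T0 ≤ T1 ∧ ∀ t, T1 ≤ t → Λ t = Λ T1 := by
    set f : ℕ → ℕ := fun s => (Λ (T0 + s)).card with hf
    have hrangene : (Set.range f).Nonempty := ⟨f 0, 0, rfl⟩
    obtain ⟨s0, hs0⟩ : ∃ s0, f s0 = sInf (Set.range f) := by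
      have := Nat.sInf_mem hrangene
      obtain ⟨s0, hs0⟩ := this
      exact ⟨s0, hs0⟩
    refine ⟨T0 + s0, Nat.le_add_right _ _, fun t ht => ?_⟩
    have hsub : Λ t ⊆ Λ (T0 + s0) := hΛchain _ _ (Nat.le_add_right _ _) ht
    have hmemrange : (Λ t).card ∈ Set.range f := by
      refine ⟨t - T0, ?_⟩
      have h4 : T0 + (t - T0) = t := by omega
      show (Λ (T0 + (t - T0))).card = (Λ t).card
      rw [h4]
    have hcardle : (Λ (T0 + s0)).card ≤ (Λ t).card := by
      have h1 : sInf (Set.range f) ≤ (Λ t).card := Nat.sInf_le hmemrange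
      rw [← hs0] at h1
      exact h1
    exact Finset.eq_of_subset_of_card_le hsub hcardle
  set W := Λ T1 with hW
  have hWne : W.Nonempty := by
    obtain ⟨p, hp⟩ := hA2 T1
    refine ⟨p, ?_⟩
    rw [hW, hΛmem, hp]
    have h8 := hAle T1
    have h9 : (0:ℝ) ≤ (n:ℝ) * ε := by positivity
    linarith
  -- neighborhoods of W members equal W
  have hNW : ∀ t, T1 ≤ t → ∀ i ∈ W, hkN r (x t) i = W := by
    intro t ht i hi
    apply Finset.Subset.antisymm
    · have h1 : i ∈ Λ (t + 1) := by rw [hstab (t + 1) (le_trans ht (Nat.le_succ t))]; exact hi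
      have h2 := hΛN t (le_trans hT1ge ht) i h1
      rwa [hstab t ht] at h2
    · intro j hj
      rw [hmemN]
      have hjΛ : j ∈ Λ t := by rw [hstab t ht]; exact hj
      have hiΛ : i ∈ Λ t := by rw [hstab t ht]; exact hi
      rw [hΛmem] at hjΛ hiΛ
      have hj1 := hA1 t j
      have hi1 := hA1 t i
      have hAt := hAT0 t (le_trans hT1ge ht)
      rw [abs_le]
      have hri := hρle i
      have hexp : ((n:ℝ) + 1) * ε = (n:ℝ) * ε + ε := by ring
      constructor
      · linarith
      · linarith
  -- consensus value
  set c := (∑ j ∈ W, x T1 j) / (W.card : ℝ) with hc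
  have hWc : ∀ t, T1 + 1 ≤ t → ∀ i ∈ W, x t i = c := by
    intro t ht
    induction t, ht using Nat.le_induction with
    | base =>
      intro i hi
      rw [hHK T1 i, hNW T1 le_rfl i hi]
    | succ t'' ht'' ih =>
      intro i hi
      rw [hHK t'' i, hNW t'' (le_trans (Nat.le_succ T1) ht'') i hi]
      exact avg_const hWne fun j hj => ih j hj
  obtain ⟨w0, hw0⟩ := hWne
  have hcval : x (T1 + 1) w0 = c := hWc (T1 + 1) le_rfl w0 hw0
  have hc_le : c ≤ As + (n:ℝ) * ε := by
    have : w0 ∈ Λ (T1 + 1) := by rw [hstab (T1 + 1) (Nat.le_succ T1)]; exact hw0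
    rw [hΛmem] at this
    rwa [hcval] at this
  have hc_gt : As - ε < c := by
    have h1 := hA1 (T1 + 1) w0
    have h2 := hAT0 (T1 + 1) (le_trans hT1ge (Nat.le_succ T1))
    rw [hcval] at h1
    linarith
  -- the escape bound
  have E2 : ∀ t, T1 + 1 ≤ t → ∀ i, i ∉ W → As - ε + ρ < x t i := by
    intro t ht i hi
    have hbig : As + (n:ℝ) * ε < x t i := by
      have : i ∉ Λ t := by rw [hstab t (le_trans (Nat.le_succ T1) ht)]; exact hi
      rw [hΛmem] at this
      push_neg at this
      exact this
    have hxw : x t w0 = c := hWc t ht w0 hw0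
    have hxw' : x (t + 1) w0 = c := hWc (t + 1) (le_trans ht (Nat.le_succ t)) w0 hw0
    have hnotmem : i ∉ hkN r (x t) w0 := by
      intro hmem
      have := push t (le_trans hT1ge (le_trans (Nat.le_succ T1) ht)) w0 i hmem hbig
      rw [hxw'] at this
      linarith
    rw [hmemN] at hnotmem
    push_neg at hnotmem
    rw [hxw] at hnotmem
    have habs : |x t i - c| = x t i - c := by
      apply abs_of_pos
      linarith
    rw [habs] at hnotmem
    have := hρle w0
    linarith
  -- package
  refine ⟨T1 + 1, W, c, ⟨w0, hw0⟩, ?_, hWc, ?_⟩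
  · intro t ht i
    constructor
    · intro hi
      rw [hWc t ht i hi]
      exact hc_le
    · intro hx
      have : i ∈ Λ t := by rw [hΛmem]; exact hx
      rwa [hstab t (le_trans (Nat.le_succ T1) ht)] at this
  · exact E2

end HKaux

set_option maxHeartbeats 2000000 in
theorem stmt_13 (n : ℕ) (hn : 0 < n) (r : Fin n → ℝ) (x : ℕ → Fin n → ℝ)
    (hr : ∀ i, 0 < r i ∧ r i ≤ 1) (hx0 : ∀ i, x 0 i ∈ Set.Icc (0 : ℝ) 1)
    (hHK : isHK r x)
    (hinit : (⨆ i, x 0 i) - (⨅ i, x 0 i) ≤ 2 * ⨅ i, r i) :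
    ∃ tstar : ℕ, ∃ xs : Fin n → ℝ, ∀ t, tstar ≤ t → ∀ i, x t i = xs i := by
  classical
  have hr0 : ∀ i, 0 < r i := fun i => (hr i).1
  have He : (Finset.univ : Finset (Fin n)).Nonempty := ⟨⟨0, hn⟩, mem_univ _⟩
  haveI hnefin : Nonempty (Fin n) := ⟨⟨0, hn⟩⟩
  set A : ℕ → ℝ := fun t => Finset.univ.inf' He (x t) with hAdef
  set B : ℕ → ℝ := fun t => Finset.univ.sup' He (x t) with hBdef
  have hA1 : ∀ t i, A t ≤ x t i := fun t i => inf'_le _ (mem_univ i)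
  have hB1 : ∀ t i, x t i ≤ B t := fun t i => le_sup' _ (mem_univ i)
  have hA2 : ∀ t, ∃ i, x t i = A t := by
    intro t
    obtain ⟨i, -, h⟩ := Finset.exists_mem_eq_inf' He (x t)
    exact ⟨i, h.symm⟩
  have hB2 : ∀ t, ∃ i, x t i = B t := by
    intro t
    obtain ⟨i, -, h⟩ := Finset.exists_mem_eq_sup' He (x t)
    exact ⟨i, h.symm⟩
  -- the minimal radius
  have hbddr : BddBelow (Set.range r) := (Set.finite_range r).bddBelow
  have hρle : ∀ i, (⨅ i, r i) ≤ r i := fun i => ciInf_le hbddr i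
  have hρ : 0 < ⨅ i, r i := by
    obtain ⟨i0, -, hi0⟩ := Finset.exists_min_image Finset.univ r He
    have h1 : r i0 ≤ ⨅ i, r i := le_ciInf fun j => hi0 j (mem_univ j)
    linarith [hr0 i0]
  -- neighborhood basics
  have hself : ∀ t i, i ∈ hkN r (x t) i := by
    intro t i
    simp [hkN, sub_self, abs_zero, (hr0 i).le]
  have hmemN : ∀ t i j, j ∈ hkN r (x t) i ↔ |x t j - x t i| ≤ r i := by
    intro t i j; simp [hkN]
  have hNne : ∀ t i, (hkN r (x t) i).Nonempty := fun t i => ⟨i, hself t i⟩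
  have hNcard : ∀ t i, ((hkN r (x t) i).card : ℝ) ≤ n := by
    intro t i
    have := Finset.card_le_univ (hkN r (x t) i)
    have h3 : (hkN r (x t) i).card ≤ n := by simpa using this
    exact_mod_cast h3
  -- monotonicity
  have hAstep : ∀ t, A t ≤ A (t + 1) := by
    intro t
    obtain ⟨i, hi⟩ := hA2 (t + 1)
    rw [← hi, hHK t i]
    exact HKaux.le_avg (hNne t i) fun j _ => hA1 t j
  have hBstep : ∀ t, B (t + 1) ≤ B t := by
    intro t
    obtain ⟨i, hi⟩ := hB2 (t + 1)
    rw [← hi, hHK t i]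
    exact HKaux.avg_le (hNne t i) fun j _ => hB1 t j
  have hAmono : Monotone A := monotone_nat_of_le_succ hAstep
  have hBanti : Antitone B := antitone_nat_of_succ_le hBstep
  -- initial spread
  have hsp0 : B 0 - A 0 ≤ 2 * ⨅ i, r i := by
    obtain ⟨imax, hmax⟩ := hB2 0
    obtain ⟨imin, hmin⟩ := hA2 0
    have h1 : B 0 ≤ ⨆ i, x 0 i := by
      rw [← hmax]
      exact le_ciSup (Set.finite_range _).bddAbove imax
    have h2 : (⨅ i, x 0 i) ≤ A 0 := by
      rw [← hmin]
      exact ciInf_le (Set.finite_range _).bddBelow imin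
    linarith
  have hsp : ∀ t, B t - A t ≤ 2 * ⨅ i, r i := by
    intro t
    have := hAmono (Nat.zero_le t)
    have := hBanti (Nat.zero_le t)
    linarith
  by_cases hR : ∀ t, B t - A t = 2 * ⨅ i, r i
  · -- rigid case: two frozen clusters from the start
    have hAconst : ∀ t, A t = A 0 := by
      intro t
      have h1 := hR t
      have h2 := hR 0
      have h3 := hBanti (Nat.zero_le t)
      have h4 := hAmono (Nat.zero_le t)
      linarith
    have hBconst : ∀ t, B t = B 0 := by
      intro t
      have h1 := hR t
      have h2 := hR 0
      have := hAconst t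
      linarith
    have h2ρ : B 0 - A 0 = 2 * ⨅ i, r i := hR 0
    have htwo : ∀ t i, x t i = A 0 ∨ x t i = B 0 := by
      intro t i
      obtain ⟨p, hp⟩ := hA2 (t + 1)
      have havgp : (∑ j ∈ hkN r (x t) p, x t j) / ((hkN r (x t) p).card : ℝ) = A 0 := by
        rw [← hHK t p, hp, hAconst]
      have hge : ∀ k ∈ hkN r (x t) p, A 0 ≤ x t k := by
        intro k _
        rw [← hAconst t]; exact hA1 t k
      have hallp : ∀ j ∈ hkN r (x t) p, x t j = A 0 :=
        fun j hj => HKaux.eq_of_avg_eq_le hj hge havgp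
      have hxp : x t p = A 0 := hallp p (hself t p)
      have hbot : ∀ i', x t i' ≤ A 0 + r p → x t i' = A 0 := by
        intro i' hi'
        apply hallp i'
        rw [hmemN, abs_le, hxp]
        have := hA1 t i'
        have := hAconst t
        constructor <;> [linarith [hr0 p]; linarith]
      obtain ⟨q, hq⟩ := hB2 (t + 1)
      have havgq : (∑ j ∈ hkN r (x t) q, x t j) / ((hkN r (x t) q).card : ℝ) = B 0 := by
        rw [← hHK t q, hq, hBconst]
      have hle : ∀ k ∈ hkN r (x t) q, x t k ≤ B 0 := by
        intro k _
        rw [← hBconst t]; exact hB1 t k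
      have hallq : ∀ j ∈ hkN r (x t) q, x t j = B 0 :=
        fun j hj => HKaux.eq_of_avg_eq_ge hj hle havgq
      have hxq : x t q = B 0 := hallq q (hself t q)
      have htop : ∀ i', B 0 - r q ≤ x t i' → x t i' = B 0 := by
        intro i' hi'
        apply hallq i'
        rw [hmemN, abs_le, hxq]
        have := hB1 t i'
        have := hBconst t
        constructor <;> [linarith; linarith [hr0 q]]
      rcases le_total (x t i) (A 0 + ⨅ i, r i) with h | h
      · exact Or.inl (hbot i (by linarith [hρle p]))
      · exact Or.inr (htop i (by linarith [hρle q]))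
    have hfreeze : ∀ t i, x (t + 1) i = x t i := by
      intro t i
      have hstrict : ∀ j ∈ hkN r (x t) i, ∀ j' ∈ hkN r (x t) i,
          x t j = A 0 → x t j' = B 0 → False := by
        intro j hj j' hj' hjA hjB
        have hcardpos : (0:ℝ) < ((hkN r (x t) i).card : ℝ) := HKaux.card_pos_real (hNne t i)
        have hge : ∀ k ∈ hkN r (x t) i, A 0 ≤ x t k := by
          intro k _; rw [← hAconst t]; exact hA1 t k
        have hle : ∀ k ∈ hkN r (x t) i, x t k ≤ B 0 := by
          intro k _; rw [← hBconst t]; exact hB1 t k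
        have hlow := HKaux.le_avg_push hj' hge hjB.ge
        have hupp := HKaux.avg_le_push hj hle hjA.le
        have hd1 : (0:ℝ) < (B 0 - A 0) / ((hkN r (x t) i).card : ℝ) :=
          div_pos (by linarith [hρ]) hcardpos
        have hd2 : (A 0 - B 0) / ((hkN r (x t) i).card : ℝ) < 0 :=
          div_neg_of_neg_of_pos (by linarith [hρ]) hcardpos
        have hgt : A 0 < x (t + 1) i := by rw [hHK t i]; linarith
        have hlt : x (t + 1) i < B 0 := by rw [hHK t i]; linarith
        rcases htwo (t + 1) i with h' | h' <;> linarith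
      rcases htwo t i with hbase | hbase
      · have hallA : ∀ j ∈ hkN r (x t) i, x t j = A 0 := by
          intro j hj
          rcases htwo t j with h | h
          · exact h
          · exact absurd (hstrict i (hself t i) j hj hbase h) (fun f => f)
        rw [hHK t i, HKaux.avg_const (hNne t i) hallA, hbase]
      · have hallB : ∀ j ∈ hkN r (x t) i, x t j = B 0 := by
          intro j hj
          rcases htwo t j with h | h
          · exact absurd (hstrict j hj i (hself t i) h hbase) (fun f => f)
          · exact h
        rw [hHK t i, HKaux.avg_const (hNne t i) hallB, hbase]
    have hconst : ∀ t i, x t i = x 0 i := by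
      intro t
      induction t with
      | zero => intro i; rfl
      | succ t ih => intro i; rw [hfreeze t i, ih i]
    exact ⟨0, x 0, fun t _ i => hconst t i⟩
  · -- non-rigid case
    push_neg at hR
    obtain ⟨t1, ht1⟩ := hR
    have hbddA : BddAbove (Set.range A) := by
      refine ⟨B 0, ?_⟩
      rintro y ⟨t, rfl⟩
      obtain ⟨i, hi⟩ := hA2 t
      calc A t = x t i := hi.symm
        _ ≤ B t := hB1 t i
        _ ≤ B 0 := hBanti (Nat.zero_le t)
    have hbddB : BddBelow (Set.range B) := by
      refine ⟨A 0, ?_⟩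
      rintro y ⟨t, rfl⟩
      obtain ⟨i, hi⟩ := hB2 t
      calc A 0 ≤ A t := hAmono (Nat.zero_le t)
        _ ≤ x t i := hA1 t i
        _ = B t := hi
    have hd : (⨅ s, B s) - (⨆ s, A s) < 2 * ⨅ i, r i := by
      have h1 : A t1 ≤ ⨆ s, A s := le_ciSup hbddA t1
      have h2 : (⨅ s, B s) ≤ B t1 := ciInf_le hbddB t1
      have h3 : B t1 - A t1 < 2 * ⨅ i, r i := lt_of_le_of_ne (hsp t1) ht1
      linarith
    have hn0 : (0:ℝ) < n := by exact_mod_cast hn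
    set ε := min ((2 * (⨅ i, r i) - ((⨅ s, B s) - ⨆ s, A s)) / 2)
      ((⨅ i, r i) / (4 * ((n:ℝ) + 1) ^ 2)) with hεdef
    have hεpos : 0 < ε := by
      apply lt_min
      · linarith
      · positivity
    have hε1 : ((n : ℝ) + 1) * ε < (⨅ i, r i) / (2 * n) := by
      have h1 : ε ≤ (⨅ i, r i) / (4 * ((n:ℝ) + 1) ^ 2) := min_le_right _ _
      have h2 : ((n:ℝ) + 1) * ε ≤ ((n:ℝ) + 1) * ((⨅ i, r i) / (4 * ((n:ℝ) + 1) ^ 2)) :=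
        mul_le_mul_of_nonneg_left h1 (by positivity)
      have h3 : ((n:ℝ) + 1) * ((⨅ i, r i) / (4 * ((n:ℝ) + 1) ^ 2))
          = (⨅ i, r i) / (4 * ((n:ℝ) + 1)) := by
        field_simp
      have h4 : (⨅ i, r i) / (4 * ((n:ℝ) + 1)) < (⨅ i, r i) / (2 * n) := by
        apply div_lt_div_of_pos_left hρ (by positivity)
        linarith
      linarith [h2.trans_eq h3]
    obtain ⟨T2, W, c, hWne, hWiff, hWc, hWout⟩ :=
      HKaux.half n hn r x hr0 hHK (⨅ i, r i) hρ hρle A B hA1 hA2 hB1 hB2 ε hεpos hε1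
    -- the reflected system
    have hHK' : isHK r (fun t i => -(x t i)) := by
      intro t i
      have hset : hkN r (fun j => -(x t j)) i = hkN r (x t) i := by
        ext j
        simp only [hkN, mem_filter, mem_univ, true_and]
        rw [show -x t j - -x t i = -(x t j - x t i) by ring, abs_neg]
      show -(x (t + 1) i)
        = (∑ j ∈ hkN r (fun j => -(x t j)) i, -(x t j)) / ((hkN r (fun j => -(x t j)) i).card : ℝ)
      rw [hset, hHK t i, Finset.sum_neg_distrib, neg_div]
    obtain ⟨T3, U, c2, hUne, hUiff, hUc, hUout⟩ :=
      HKaux.half n hn r (fun t i => -(x t i)) hr0 hHK' (⨅ i, r i) hρ hρle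
        (fun t => -(B t)) (fun t => -(A t))
        (fun t i => neg_le_neg (hB1 t i))
        (fun t => (hB2 t).imp fun i hi => by simp [hi])
        (fun t i => neg_le_neg (hA1 t i))
        (fun t => (hA2 t).imp fun i hi => by simp [hi])
        ε hεpos hε1
    have hneg : (⨆ s, -B s) = -(⨅ s, B s) := HKaux.iSup_neg_seq B hbddB
    refine ⟨max T2 T3, fun i => if i ∈ W then c else -c2, ?_⟩
    intro t ht i
    show x t i = if i ∈ W then c else -c2
    have ht2 : T2 ≤ t := le_trans (le_max_left _ _) ht
    have ht3 : T3 ≤ t := le_trans (le_max_right _ _) ht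
    by_cases hiW : i ∈ W
    · rw [if_pos hiW]
      exact hWc t ht2 i hiW
    · rw [if_neg hiW]
      have h1 := hWout t ht2 i hiW
      by_cases hiU : i ∈ U
      · have h2 : -(x t i) = c2 := hUc t ht3 i hiU
        linarith [h2]
      · exfalso
        have h2 : (⨆ s, -B s) - ε + (⨅ i, r i) < -(x t i) := hUout t ht3 i hiU
        rw [hneg] at h2
        have hεle : ε ≤ (2 * (⨅ i, r i) - ((⨅ s, B s) - ⨆ s, A s)) / 2 := min_le_left _ _
        linarith
end
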